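/- arXiv:2204.10479 — 2 statements merged into one kernel-verified Lean document; each statement's English description precedes it below -/
import Mathlib

section
/- Let α ∈ (0,1), γ ∈ [0,1), let d : S → ℝ be a probability distribution with d(s) > 0 for all s, D the diagonal matrix of d, P an n×n row-stochastic nonnegative matrix, A = I + α(γ D P − D), and ρ = 1 − α·d_min·(1−γ) with d_min = min_s d(s). Let (W_k) be symmetric positive semidefinite n×n matrices with λ_max(W_k) ≤ 9/(1−γ)² for all k, fix x_0 ∈ ℝ^S, set X_0 = x_0 x_0^T, and define X_{k+1} = A X_k A^T + α² W_k. Then for all k ≥ 0, tr(X_k) ≤ 36 n² α/(d_min (1−γ)³) + ‖x_0‖_2² n² ρ^{2k}. -/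
/-!
The argument is entrywise. The matrix `A` is nonnegative with row sums
`1 - α (1 - γ) d s ≤ ρ`, so `X ↦ A X Aᵀ` multiplies the largest entry modulus by at most `ρ²`,
while a positive semidefinite `W` has `|W i j| ≤ (W i i + W j j) / 2 ≤ λ_max W`. Hence every entry
of `X k` is at most `α² · 9 / (1 - γ)² · ∑_{m<k} ρ^{2m} + ‖x₀‖² ρ^{2k}`; summing the `n` diagonal
entries and using `∑_{m<k} ρ^{2m} ≤ 1 / (1 - ρ) = 1 / (α d_min (1 - γ))` gives the bound.
-/

open Finset Matrix

/-- The largest eigenvalue of a real matrix: the supremum of the set of its real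
eigenvalues.  For a real symmetric matrix this is the usual `λ_max`. -/
noncomputable def lamMax {S : Type*} [Fintype S] (M : Matrix S S ℝ) : ℝ :=
  sSup {μ : ℝ | ∃ v : S → ℝ, v ≠ 0 ∧ M.mulVec v = μ • v}

theorem geom_sum_sq_le_inv_one_sub {ρ : ℝ} (hρ₀ : 0 ≤ ρ) (hρ₁ : ρ < 1) (k : ℕ) :
    ∑ m ∈ range k, (ρ ^ 2) ^ m ≤ (1 - ρ)⁻¹ := by
  have hρ2 : ρ ^ 2 ≤ ρ := by nlinarith
  calc ∑ m ∈ range k, (ρ ^ 2) ^ m ≤ (ρ ^ 2) ^ 0 / (1 - ρ ^ 2) := by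
        rw [range_eq_Ico]; exact geom_sum_Ico_le_of_lt_one (sq_nonneg ρ) (by nlinarith)
    _ ≤ (1 - ρ)⁻¹ := by
        rw [pow_zero, one_div]; exact inv_anti₀ (by linarith) (by linarith)

theorem abs_mul_le_sum_sq {S : Type*} [Fintype S] (x : S → ℝ) (i j : S) :
    |x i * x j| ≤ ∑ s, x s ^ 2 := by
  have hle (s : S) : x s ^ 2 ≤ ∑ s, x s ^ 2 :=
    single_le_sum (f := fun s => x s ^ 2) (fun s _ => sq_nonneg _) (mem_univ s)
  rw [abs_mul]
  nlinarith [sq_nonneg (|x i| - |x j|), sq_abs (x i), sq_abs (x j), hle i, hle j]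

namespace Matrix

variable {S : Type*} [Fintype S]

theorem lamMax_eq_sSup_spectrum [DecidableEq S] (M : Matrix S S ℝ) :
    lamMax M = sSup (spectrum ℝ M) := by
  rw [lamMax, ← spectrum_toLin']
  congr 1
  ext μ
  rw [← Module.End.hasEigenvalue_iff_mem_spectrum]
  constructor
  · rintro ⟨v, hv, hMv⟩
    exact Module.End.hasEigenvalue_of_hasEigenvector ⟨Module.End.mem_eigenspace_iff.2 hMv, hv⟩
  · intro h
    obtain ⟨v, hv_mem, hv⟩ := h.exists_hasEigenvector
    exact ⟨v, hv, Module.End.mem_eigenspace_iff.1 hv_mem⟩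

open scoped MatrixOrder Matrix.Norms.L2Operator in
theorem IsHermitian.le_lamMax_smul_one [DecidableEq S] {M : Matrix S S ℝ} (hM : M.IsHermitian) :
    M ≤ lamMax M • (1 : Matrix S S ℝ) := by
  rw [← Algebra.algebraMap_eq_smul_one, lamMax_eq_sSup_spectrum]
  exact le_algebraMap_of_spectrum_le (fun x hx => le_csSup M.finite_real_spectrum.bddAbove hx)
    hM.isSelfAdjoint

theorem IsHermitian.apply_self_le_lamMax {M : Matrix S S ℝ} (hM : M.IsHermitian) (i : S) :
    M i i ≤ lamMax M := by
  classical
  simpa using (le_iff.1 hM.le_lamMax_smul_one).diag_nonneg (i := i)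

theorem PosSemidef.abs_apply_le_half_add [DecidableEq S] {M : Matrix S S ℝ} (hM : M.PosSemidef)
    (i j : S) : |M i j| ≤ (M i i + M j j) / 2 := by
  have hform (c : ℝ) : 0 ≤ M i i + c * (M i j + M j i) + c ^ 2 * M j j := by
    have := hM.dotProduct_mulVec_nonneg (Pi.single i 1 + Pi.single j c)
    simp only [star_trivial, mulVec_add, mulVec_single, MulOpposite.op_one, one_smul,
      op_smul_eq_smul, dotProduct_add, add_dotProduct, single_dotProduct, col_apply, one_mul,
      dotProduct_smul, smul_eq_mul] at this
    linarith
  have hsymm : M j i = M i j := hM.isHermitian.apply i j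
  rw [abs_le]
  constructor <;> nlinarith [hform 1, hform (-1)]

theorem PosSemidef.abs_apply_le_lamMax {M : Matrix S S ℝ} (hM : M.PosSemidef) (i j : S) :
    |M i j| ≤ lamMax M := by
  classical
  linarith [hM.abs_apply_le_half_add i j, hM.isHermitian.apply_self_le_lamMax i,
    hM.isHermitian.apply_self_le_lamMax j]

theorem abs_mul_apply_le {A X : Matrix S S ℝ} {b : ℝ} (hX : ∀ i j, |X i j| ≤ b) (i j : S) :
    |(A * X) i j| ≤ (∑ l, |A i l|) * b :=
  calc |(A * X) i j| ≤ ∑ l, |A i l| * |X l j| := by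
        simpa only [mul_apply, abs_mul] using abs_sum_le_sum_abs (fun l => A i l * X l j) univ
    _ ≤ ∑ l, |A i l| * b := by gcongr with l; exact hX l j
    _ = (∑ l, |A i l|) * b := by rw [sum_mul]

theorem abs_mul_mul_transpose_apply_le {A X : Matrix S S ℝ} {ρ b : ℝ}
    (hA : ∀ i, ∑ j, |A i j| ≤ ρ) (hX : ∀ i j, |X i j| ≤ b) (i j : S) :
    |(A * X * Aᵀ) i j| ≤ ρ ^ 2 * b := by
  have hb : 0 ≤ b := (abs_nonneg _).trans (hX i j)
  have hρ : 0 ≤ ρ := (sum_nonneg fun l _ => abs_nonneg (A i l)).trans (hA i)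
  have hAX (i j : S) : |(A * X) i j| ≤ ρ * b :=
    (abs_mul_apply_le hX i j).trans (mul_le_mul_of_nonneg_right (hA i) hb)
  have hAXt : |(A * (A * X)ᵀ) j i| ≤ ρ * (ρ * b) :=
    (abs_mul_apply_le (fun i j => hAX j i) j i).trans
      (mul_le_mul_of_nonneg_right (hA j) (mul_nonneg hρ hb))
  have hswap : (A * X * Aᵀ) i j = (A * (A * X)ᵀ) j i := by
    rw [← transpose_apply (A * (A * X)ᵀ), transpose_mul, transpose_transpose]
  rw [hswap]
  linarith

theorem abs_apply_le_of_eq_mul_mul_transpose_add {A : Matrix S S ℝ} {X E : ℕ → Matrix S S ℝ}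
    {ρ b c : ℝ} (hA : ∀ i, ∑ j, |A i j| ≤ ρ) (hE : ∀ k i j, |E k i j| ≤ c)
    (hX₀ : ∀ i j, |X 0 i j| ≤ b) (hX : ∀ k, X (k + 1) = A * X k * Aᵀ + E k) (k : ℕ) (i j : S) :
    |X k i j| ≤ c * ∑ m ∈ range k, (ρ ^ 2) ^ m + b * (ρ ^ 2) ^ k := by
  induction k generalizing i j with
  | zero => simpa using hX₀ i j
  | succ k ih =>
    calc |X (k + 1) i j| ≤ |(A * X k * Aᵀ) i j| + |E k i j| := by
          rw [hX k, add_apply]; exact abs_add_le _ _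
      _ ≤ ρ ^ 2 * (c * ∑ m ∈ range k, (ρ ^ 2) ^ m + b * (ρ ^ 2) ^ k) + c :=
          add_le_add (abs_mul_mul_transpose_apply_le hA ih i j) (hE k i j)
      _ = c * ∑ m ∈ range (k + 1), (ρ ^ 2) ^ m + b * (ρ ^ 2) ^ (k + 1) := by
          rw [geom_sum_succ]; ring

theorem trace_le_card_mul_of_abs_le {X : Matrix S S ℝ} {b : ℝ} (hX : ∀ i, |X i i| ≤ b) :
    X.trace ≤ Fintype.card S * b :=
  calc X.trace ≤ ∑ _i : S, b := sum_le_sum fun i _ => (le_abs_self _).trans (hX i)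
    _ = Fintype.card S * b := by rw [sum_const, card_univ, nsmul_eq_mul]

theorem trace_le_of_eq_mul_mul_transpose_add {A : Matrix S S ℝ} {X E : ℕ → Matrix S S ℝ}
    {ρ b c : ℝ} (hρ : ρ < 1) (hA : ∀ i, ∑ j, |A i j| ≤ ρ)
    (hE : ∀ k i j, |E k i j| ≤ c) (hX₀ : ∀ i j, |X 0 i j| ≤ b)
    (hX : ∀ k, X (k + 1) = A * X k * Aᵀ + E k) (k : ℕ) :
    (X k).trace ≤ Fintype.card S * (c / (1 - ρ) + b * ρ ^ (2 * k)) := by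
  refine trace_le_card_mul_of_abs_le fun i => ?_
  have hρ₀ : 0 ≤ ρ := (sum_nonneg fun j _ => abs_nonneg (A i j)).trans (hA i)
  have hc : 0 ≤ c := (abs_nonneg _).trans (hE 0 i i)
  calc |X k i i| ≤ c * ∑ m ∈ range k, (ρ ^ 2) ^ m + b * (ρ ^ 2) ^ k :=
        abs_apply_le_of_eq_mul_mul_transpose_add hA hE hX₀ hX k i i
    _ ≤ c * (1 - ρ)⁻¹ + b * ρ ^ (2 * k) := by
        rw [← pow_mul]; gcongr; exact geom_sum_sq_le_inv_one_sub hρ₀ hρ k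

end Matrix

def tdIterationMatrix {S : Type*} [Fintype S] [DecidableEq S] (α γ : ℝ) (d : S → ℝ)
    (P : Matrix S S ℝ) : Matrix S S ℝ :=
  1 + α • (γ • (diagonal d * P) - diagonal d)

section tdIterationMatrix

variable {S : Type*} [Fintype S] [DecidableEq S] {α γ : ℝ} {d : S → ℝ} {P : Matrix S S ℝ}

theorem tdIterationMatrix_apply (i j : S) :
    tdIterationMatrix α γ d P i j = (if i = j then 1 - α * d i else 0) + α * γ * d i * P i j := by
  by_cases h : i = j <;> simp [tdIterationMatrix, h, one_apply] <;> ring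

theorem tdIterationMatrix_nonneg (hα : 0 ≤ α) (hγ : 0 ≤ γ) (hd : ∀ s, 0 ≤ d s)
    (hαd : ∀ s, α * d s ≤ 1) (hP : ∀ i j, 0 ≤ P i j) (i j : S) :
    0 ≤ tdIterationMatrix α γ d P i j := by
  have hoff : 0 ≤ α * γ * d i * P i j := by have := hd i; have := hP i j; positivity
  rw [tdIterationMatrix_apply]
  split_ifs
  · linarith [hαd i]
  · linarith

theorem sum_tdIterationMatrix_apply (hP : ∀ i, ∑ j, P i j = 1) (i : S) :
    ∑ j, tdIterationMatrix α γ d P i j = 1 - α * (1 - γ) * d i := by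
  simp only [tdIterationMatrix_apply, sum_add_distrib, sum_ite_eq, mem_univ, if_true,
    ← mul_sum, hP i]
  ring

theorem sum_abs_tdIterationMatrix_apply_le (hα₀ : 0 ≤ α) (hα₁ : α ≤ 1) (hγ₀ : 0 ≤ γ)
    (hγ₁ : γ ≤ 1) (hd : ∀ s, 0 ≤ d s) (hd₁ : ∑ s, d s = 1) (hP₀ : ∀ i j, 0 ≤ P i j)
    (hP₁ : ∀ i, ∑ j, P i j = 1) (i : S) :
    ∑ j, |tdIterationMatrix α γ d P i j| ≤ 1 - α * (⨅ s, d s) * (1 - γ) := by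
  have hαd (s : S) : α * d s ≤ 1 :=
    mul_le_one₀ hα₁ (hd s) (hd₁ ▸ single_le_sum (fun t _ => hd t) (mem_univ s))
  have hdmin : (⨅ s, d s) ≤ d i := ciInf_le (Set.finite_range d).bddBelow i
  simp only [abs_of_nonneg (tdIterationMatrix_nonneg hα₀ hγ₀ hd hαd hP₀ i _),
    sum_tdIterationMatrix_apply hP₁]
  nlinarith [mul_nonneg (mul_nonneg hα₀ (sub_nonneg.2 hγ₁)) (sub_nonneg.2 hdmin)]

end tdIterationMatrix

/-- **Trace bound of the correlation iterates.**  With `A = I + α(γ D P − D)`,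
`ρ = 1 − α·d_min·(1−γ)`, a sequence `W k` of symmetric positive semidefinite matrices
with `λ_max(W k) ≤ 9/(1−γ)²`, `X 0 = x₀ x₀ᵀ`, and the recursion
`X (k+1) = A (X k) Aᵀ + α² W k`, we have, for all `k`,
`tr(X k) ≤ 36 n² α/(d_min (1−γ)³) + ‖x₀‖₂² n² ρ^{2k}`, where `n = |S|` and
`‖x₀‖₂² = ∑ s, x₀(s)²`. -/
theorem correlation_iterates_trace_bound
    {S : Type*} [Fintype S] [Nonempty S] [DecidableEq S]
    (γ α : ℝ) (hγ0 : 0 ≤ γ) (hγ1 : γ < 1) (hα0 : 0 < α) (hα1 : α < 1)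
    (d : S → ℝ) (hd : ∀ s, 0 < d s) (hd1 : ∑ s, d s = 1)
    (P : Matrix S S ℝ) (hP0 : ∀ i j, 0 ≤ P i j) (hP1 : ∀ i, ∑ j, P i j = 1)
    (A : Matrix S S ℝ)
    (hA : A = 1 + α • (γ • (Matrix.diagonal d * P) - Matrix.diagonal d))
    (ρ : ℝ) (hρ : ρ = 1 - α * (⨅ s : S, d s) * (1 - γ))
    (W : ℕ → Matrix S S ℝ) (hW : ∀ k, (W k).PosSemidef)
    (hWbound : ∀ k, lamMax (W k) ≤ 9 / (1 - γ) ^ 2)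
    (x₀ : S → ℝ)
    (X : ℕ → Matrix S S ℝ) (hX0 : X 0 = Matrix.of fun i j => x₀ i * x₀ j)
    (hXrec : ∀ k, X (k + 1) = A * X k * Aᵀ + (α ^ 2) • W k) :
    ∀ k, (X k).trace ≤
      36 * (Fintype.card S : ℝ) ^ 2 * α / ((⨅ s : S, d s) * (1 - γ) ^ 3) +
        (∑ s, x₀ s ^ 2) * (Fintype.card S : ℝ) ^ 2 * ρ ^ (2 * k) := by
  intro k
  set dmin := ⨅ s : S, d s
  set n : ℝ := (Fintype.card S : ℝ)
  have hdmin_pos : 0 < dmin := by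
    obtain ⟨s, hs⟩ := exists_eq_ciInf_of_finite (f := d)
    exact (hd s).trans_eq hs
  have hA_row (i : S) : ∑ j, |A i j| ≤ ρ := hρ ▸ hA ▸
    sum_abs_tdIterationMatrix_apply_le hα0.le hα1.le hγ0 hγ1.le (fun s => (hd s).le) hd1 hP0 hP1 i
  have hnoise (k : ℕ) (i j : S) : |(α ^ 2 • W k) i j| ≤ α ^ 2 * (9 / (1 - γ) ^ 2) := by
    rw [Matrix.smul_apply, smul_eq_mul, abs_mul, abs_of_nonneg (sq_nonneg α)]
    gcongr
    exact ((hW k).abs_apply_le_lamMax i j).trans (hWbound k)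
  have hinit (i j : S) : |X 0 i j| ≤ ∑ s, x₀ s ^ 2 := by
    rw [hX0]; exact abs_mul_le_sum_sq x₀ i j
  have hρ_lt_one : ρ < 1 := by rw [hρ]; nlinarith [mul_pos hα0 hdmin_pos]
  have h1γ : 0 < 1 - γ := sub_pos.2 hγ1
  have hn : n ≤ n ^ 2 := by nlinarith [(Nat.one_le_cast.2 Fintype.card_pos : (1 : ℝ) ≤ n)]
  calc (X k).trace
      ≤ n * (α ^ 2 * (9 / (1 - γ) ^ 2) / (1 - ρ) + (∑ s, x₀ s ^ 2) * ρ ^ (2 * k)) :=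
        trace_le_of_eq_mul_mul_transpose_add hρ_lt_one hA_row hnoise hinit hXrec k
    _ = n * (9 * α / (dmin * (1 - γ) ^ 3) + (∑ s, x₀ s ^ 2) * ρ ^ (2 * k)) := by
        rw [hρ]; field_simp; ring
    _ ≤ 36 * n ^ 2 * α / (dmin * (1 - γ) ^ 3) + (∑ s, x₀ s ^ 2) * n ^ 2 * ρ ^ (2 * k) := by
        have hnoise_nonneg : 0 ≤ 9 * α / (dmin * (1 - γ) ^ 3) := by positivity
        have hinit_nonneg : 0 ≤ (∑ s, x₀ s ^ 2) * ρ ^ (2 * k) :=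
          mul_nonneg (by positivity) ((even_two_mul k).pow_nonneg ρ)
        rw [show 36 * n ^ 2 * α / (dmin * (1 - γ) ^ 3) =
          4 * n ^ 2 * (9 * α / (dmin * (1 - γ) ^ 3)) by ring]
        nlinarith [mul_le_mul_of_nonneg_right hn hinit_nonneg,
          mul_le_mul_of_nonneg_right hn hnoise_nonneg, mul_nonneg (sq_nonneg n) hnoise_nonneg]
end

section
/- Under the i.i.d. observation model, the mean error of the final TD iterate satisfies, for every k ≥ 0, E[‖V_k − V^π‖_2] ≤ 6 n √α/(d_min^{1/2} (1−γ)^{3/2}) + ‖V_0 − V^π‖_2 · n · ρ^k, where ρ = 1 − α·d_min·(1−γ). -/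
/-! `V^π` and, for `α ≤ 1`, every TD iterate lie in the sup-norm ball of radius `(1-γ)⁻¹`, so
every TD error is bounded by `2/(1-γ)`. The iterate `V_k` is a function of the first `k`
observations, hence independent of the fresh sample `X k`. Averaging the squared one-step error
`e_{k+1}(s) = e_k(s) + α 1{s = s_k} δ_k` over the law of `X k`, the Bellman equation turns the
mean of `δ_k` into `γ (P^π e_k)(s) - e_k(s)`, and `2xy ≤ x² + y²` gives

  `E e_{k+1}(s)² ≤ (1 - α d(s)(2-γ)) E e_k(s)² + α d(s) γ (P^π E e_k²)(s) + 4α² d(s)/(1-γ)²`.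

For `α ≤ 1/2` the largest second moment therefore contracts at rate
`1 - 2α d_min (1-γ) ≤ ρ²` towards `2α / (d_min (1-γ)³)`, and Jensen's inequality for `√·`
turns this into the bound on `E ‖V_k - V^π‖₂`. For `α > 1/2` the trivial bound
`‖V_k - V^π‖₂ ≤ 2 √n / (1-γ)` is already smaller than the first term. -/

open Finset MeasureTheory ProbabilityTheory

theorem abs_sum_mul_le_of_abs_le {ι : Type*} [Fintype ι] {w f : ι → ℝ} {C : ℝ}
    (hw0 : ∀ i, 0 ≤ w i) (hw1 : ∑ i, w i = 1) (hf : ∀ i, |f i| ≤ C) :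
    |∑ i, w i * f i| ≤ C :=
  calc |∑ i, w i * f i| ≤ ∑ i, w i * |f i| := by
        refine (abs_sum_le_sum_abs _ _).trans_eq (sum_congr rfl fun i _ => ?_)
        rw [abs_mul, abs_of_nonneg (hw0 i)]
    _ ≤ ∑ i, w i * C := sum_le_sum fun i _ => mul_le_mul_of_nonneg_left (hf i) (hw0 i)
    _ = C := by rw [← sum_mul, hw1, one_mul]

theorem one_add_mul_inv_one_sub {γ : ℝ} (hγ : γ ≠ 1) : 1 + γ * (1 - γ)⁻¹ = (1 - γ)⁻¹ := by
  field_simp [sub_ne_zero.2 hγ.symm]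
  ring

theorem le_pow_mul_add_of_forall_le {ι : Type*} {u : ℕ → ι → ℝ} {ρ B N : ℝ}
    (h0 : ∀ i, u 0 i ≤ B)
    (hstep : ∀ k A, (∀ i, u k i ≤ A) → ∀ i, u (k + 1) i ≤ ρ * A + (1 - ρ) * N) (k : ℕ) :
    ∀ i, u k i ≤ ρ ^ k * B + (1 - ρ ^ k) * N := by
  induction k with
  | zero => simpa using h0
  | succ k ih =>
    intro i
    calc u (k + 1) i ≤ ρ * (ρ ^ k * B + (1 - ρ ^ k) * N) + (1 - ρ) * N := hstep k _ ih i
      _ = ρ ^ (k + 1) * B + (1 - ρ ^ (k + 1)) * N := by ring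

theorem exists_eq_comp_history {Ω β E : Type*} (X : ℕ → Ω → β) {V : ℕ → Ω → E} {f : E → β → E}
    {v₀ : E} (h0 : ∀ ω, V 0 ω = v₀) (hstep : ∀ k ω, V (k + 1) ω = f (V k ω) (X k ω)) (k : ℕ) :
    ∃ F : (range k → β) → E, ∀ ω, V k ω = F fun i => X i ω := by
  induction k with
  | zero => exact ⟨fun _ => v₀, h0⟩
  | succ k ih =>
    obtain ⟨F, hF⟩ := ih
    refine ⟨fun h => f (F fun i => h ⟨i, range_subset_range.2 k.le_succ i.2⟩)
      (h ⟨k, self_mem_range_succ k⟩), fun ω => ?_⟩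
    rw [hstep, hF]

section Probability

variable {Ω β η : Type*} [MeasurableSpace Ω] {μ : Measure Ω} [MeasurableSpace β]
  [MeasurableSpace η]

theorem integrable_comp_of_finite [IsFiniteMeasure μ] [Finite β] [MeasurableSingletonClass β]
    {Y : Ω → β} (hY : Measurable Y) (g : β → ℝ) : Integrable (fun ω => g (Y ω)) μ :=
  Integrable.of_finite.comp_measurable hY

theorem integrable_comp_of_recursion [IsFiniteMeasure μ] {E : Type*}
    [Finite β] [MeasurableSingletonClass β] {X : ℕ → Ω → β} (hXm : ∀ k, Measurable (X k))
    {V : ℕ → Ω → E} {f : E → β → E} {v₀ : E} (h0 : ∀ ω, V 0 ω = v₀)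
    (hstep : ∀ k ω, V (k + 1) ω = f (V k ω) (X k ω)) (k : ℕ) (g : E → ℝ) :
    Integrable (fun ω => g (V k ω)) μ := by
  obtain ⟨F, hF⟩ := exists_eq_comp_history X h0 hstep k
  simp only [hF]
  exact integrable_comp_of_finite
    (measurable_pi_lambda (fun ω (i : range k) => X i ω) fun i => hXm i) (g ∘ F)

theorem integral_comp_eq_sum_of_map_eq [Fintype β] [MeasurableSingletonClass β] {Y : Ω → β}
    (hY : Measurable Y) {w : β → ℝ} (hw : ∀ b, 0 ≤ w b)
    (hlaw : μ.map Y = ∑ b, ENNReal.ofReal (w b) • Measure.dirac b) (f : β → ℝ) :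
    ∫ ω, f (Y ω) ∂μ = ∑ b, w b * f b := by
  have hf : Measurable f := measurable_of_finite f
  rw [← integral_map hY.aemeasurable hf.aestronglyMeasurable, hlaw,
    integral_finsetSum_measure fun b _ => Integrable.of_finite.smul_measure ENNReal.ofReal_ne_top]
  refine sum_congr rfl fun b _ => ?_
  rw [integral_smul_measure, integral_dirac, ENNReal.toReal_ofReal (hw b), smul_eq_mul]

theorem ProbabilityTheory.iIndepFun.indepFun_history {X : ℕ → Ω → β} (hX : iIndepFun X μ)
    (hXm : ∀ k, Measurable (X k)) (k : ℕ) : IndepFun (fun ω (i : range k) => X i ω) (X k) μ :=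
  (hX.indepFun_finset (range k) {k} (by simp) hXm).comp measurable_id
    (measurable_pi_apply (⟨k, mem_singleton_self k⟩ : ({k} : Finset ℕ)))

theorem ProbabilityTheory.IndepFun.integral_comp_eq_integral_sum [IsFiniteMeasure μ] [Finite η]
    [MeasurableSingletonClass η] [Fintype β] [MeasurableSingletonClass β]
    {H : Ω → η} {Y : Ω → β} (hH : Measurable H) (hY : Measurable Y) (hHY : IndepFun H Y μ)
    {w : β → ℝ} (hw : ∀ b, 0 ≤ w b)
    (hlaw : μ.map Y = ∑ b, ENNReal.ofReal (w b) • Measure.dirac b) (G : η → β → ℝ) :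
    ∫ ω, G (H ω) (Y ω) ∂μ = ∫ ω, ∑ b, w b * G (H ω) b ∂μ := by
  classical
  have hG : ∀ b, Integrable (fun ω => G (H ω) b) μ := fun b => integrable_comp_of_finite hH (G · b)
  have hI : ∀ b, Integrable (fun ω => if Y ω = b then (1 : ℝ) else 0) μ := fun b =>
    integrable_comp_of_finite hY fun y => if y = b then 1 else 0
  calc ∫ ω, G (H ω) (Y ω) ∂μ
      = ∫ ω, ∑ b, G (H ω) b * (if Y ω = b then 1 else 0) ∂μ := by
        simp only [mul_ite, mul_one, mul_zero, sum_ite_eq, mem_univ, if_true]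
    _ = ∑ b, (∫ ω, G (H ω) b ∂μ) * ∫ ω, (if Y ω = b then (1 : ℝ) else 0) ∂μ := by
        rw [integral_finsetSum _ fun b _ => integrable_comp_of_finite (hH.prodMk hY)
          fun p => G p.1 b * if p.2 = b then 1 else 0]
        refine sum_congr rfl fun b _ => ?_
        exact (hHY.comp (measurable_of_finite (G · b)) (measurable_of_finite
          fun y => if y = b then (1 : ℝ) else 0)).integral_fun_mul_eq_mul_integral
          (hG b).aestronglyMeasurable (hI b).aestronglyMeasurable
    _ = ∫ ω, ∑ b, w b * G (H ω) b ∂μ := by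
        rw [integral_finsetSum _ fun b _ => (hG b).const_mul _]
        refine sum_congr rfl fun b _ => ?_
        have hlaw_b := integral_comp_eq_sum_of_map_eq hY hw hlaw fun y => if y = b then 1 else 0
        simp only [mul_ite, mul_one, mul_zero, sum_ite_eq', mem_univ, if_true] at hlaw_b
        rw [integral_const_mul, hlaw_b, mul_comm]

theorem integral_sq_le_of_abs_le [IsProbabilityMeasure μ] {f : Ω → ℝ} {C : ℝ}
    (hf : ∀ ω, |f ω| ≤ C) : ∫ ω, f ω ^ 2 ∂μ ≤ C ^ 2 := by
  have hsq : ∀ ω, f ω ^ 2 ≤ C ^ 2 := fun ω => sq_le_sq' (abs_le.1 (hf ω)).1 (abs_le.1 (hf ω)).2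
  by_cases hint : Integrable (fun ω => f ω ^ 2) μ
  · exact (integral_mono hint (integrable_const _) hsq).trans_eq (by simp)
  · rw [integral_undef hint]
    exact sq_nonneg C

theorem integral_sqrt_sum_sq_le [IsProbabilityMeasure μ] {ι : Type*} [Fintype ι]
    {f : ι → Ω → ℝ} (hf : ∀ i, Integrable (fun ω => f i ω ^ 2) μ) {C : ℝ}
    (hC : ∀ i, ∫ ω, f i ω ^ 2 ∂μ ≤ C) :
    ∫ ω, √(∑ i, f i ω ^ 2) ∂μ ≤ √(Fintype.card ι * C) := by
  by_cases hint : Integrable (fun ω => √(∑ i, f i ω ^ 2)) μ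
  · calc ∫ ω, √(∑ i, f i ω ^ 2) ∂μ ≤ √(∫ ω, ∑ i, f i ω ^ 2 ∂μ) :=
          Real.strictConcaveOn_sqrt.concaveOn.le_map_integral Real.continuous_sqrt.continuousOn
            isClosed_Ici (.of_forall fun ω => Set.mem_Ici.2 (by positivity))
            (integrable_finsetSum _ fun i _ => hf i) hint
      _ ≤ √(Fintype.card ι * C) := by
          refine Real.sqrt_le_sqrt ?_
          rw [integral_finsetSum _ fun i _ => hf i]
          simpa using sum_le_sum fun i (_ : i ∈ univ) => hC i
  · rw [integral_undef hint]
    positivity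

end Probability

section TemporalDifference

variable {S A : Type*}

def tdError (γ : ℝ) (r : S → A → S → ℝ) (W : S → ℝ) (t : S × A × S) : ℝ :=
  r t.1 t.2.1 t.2.2 + γ * W t.2.2 - W t.1

def tdUpdate [DecidableEq S] (γ α : ℝ) (r : S → A → S → ℝ) (W : S → ℝ) (t : S × A × S) :
    S → ℝ :=
  fun u => W u + α * (if u = t.1 then 1 else 0) * tdError γ r W t

variable {γ α : ℝ} {r : S → A → S → ℝ} {W : S → ℝ}

theorem abs_reward_add_le (hr : ∀ s a s', |r s a s'| ≤ 1) (hγ0 : 0 ≤ γ) (hγ1 : γ < 1)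
    (hW : ∀ u, |W u| ≤ (1 - γ)⁻¹) (s : S) (a : A) (s' : S) :
    |r s a s' + γ * W s'| ≤ (1 - γ)⁻¹ :=
  calc |r s a s' + γ * W s'| ≤ 1 + γ * (1 - γ)⁻¹ := by
        refine (abs_add_le _ _).trans (add_le_add (hr s a s') ?_)
        rw [abs_mul, abs_of_nonneg hγ0]
        exact mul_le_mul_of_nonneg_left (hW s') hγ0
    _ = (1 - γ)⁻¹ := one_add_mul_inv_one_sub hγ1.ne

theorem abs_tdError_le (hr : ∀ s a s', |r s a s'| ≤ 1) (hγ0 : 0 ≤ γ) (hγ1 : γ < 1)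
    (hW : ∀ u, |W u| ≤ (1 - γ)⁻¹) (t : S × A × S) :
    |tdError γ r W t| ≤ 2 * (1 - γ)⁻¹ := by
  have := abs_sub (r t.1 t.2.1 t.2.2 + γ * W t.2.2) (W t.1)
  have := abs_reward_add_le hr hγ0 hγ1 hW t.1 t.2.1 t.2.2
  have := hW t.1
  unfold tdError
  linarith

theorem abs_tdUpdate_le [DecidableEq S] (hr : ∀ s a s', |r s a s'| ≤ 1) (hγ0 : 0 ≤ γ)
    (hγ1 : γ < 1) (hα0 : 0 ≤ α) (hα1 : α ≤ 1) (hW : ∀ u, |W u| ≤ (1 - γ)⁻¹)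
    (t : S × A × S) (u : S) : |tdUpdate γ α r W t u| ≤ (1 - γ)⁻¹ := by
  unfold tdUpdate
  split_ifs with hu
  · subst hu
    -- a convex combination of `W t.1` and `r + γ W t.2.2`, both in the ball of radius `(1-γ)⁻¹`
    have hconv : W t.1 + α * 1 * tdError γ r W t
        = (1 - α) * W t.1 + α * (r t.1 t.2.1 t.2.2 + γ * W t.2.2) := by
      unfold tdError; ring
    rw [hconv]
    have h1 := abs_le.1 (hW t.1)
    have h2 := abs_le.1 (abs_reward_add_le hr hγ0 hγ1 hW t.1 t.2.1 t.2.2)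
    rw [abs_le]
    constructor <;> nlinarith
  · simpa using hW u

theorem abs_le_inv_one_sub_of_bellman [Fintype S] [Fintype A] [Nonempty S]
    {π : S → A → ℝ} (hπ0 : ∀ s a, 0 ≤ π s a) (hπ1 : ∀ s, ∑ a, π s a = 1)
    {P : S → A → S → ℝ} (hP0 : ∀ s a s', 0 ≤ P s a s') (hP1 : ∀ s a, ∑ s', P s a s' = 1)
    (hr : ∀ s a s', |r s a s'| ≤ 1) (hγ0 : 0 ≤ γ) (hγ1 : γ < 1) {v : S → ℝ}
    (hv : ∀ s, v s = ∑ a, ∑ s', π s a * P s a s' * (r s a s' + γ * v s')) (s : S) :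
    |v s| ≤ (1 - γ)⁻¹ := by
  obtain ⟨s₁, hs₁⟩ := Finite.exists_max fun s => |v s|
  have hmean : |v s₁| ≤ 1 + γ * |v s₁| := by
    nth_rewrite 1 [hv s₁]
    simp only [mul_assoc, ← mul_sum]
    refine abs_sum_mul_le_of_abs_le (hπ0 s₁) (hπ1 s₁) fun a => ?_
    refine abs_sum_mul_le_of_abs_le (hP0 s₁ a) (hP1 s₁ a) fun s' => ?_
    refine (abs_add_le _ _).trans (add_le_add (hr s₁ a s') ?_)
    rw [abs_mul, abs_of_nonneg hγ0]
    exact mul_le_mul_of_nonneg_left (hs₁ s') hγ0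
  have h1γ : 0 < 1 - γ := sub_pos.2 hγ1
  refine (hs₁ s).trans ?_
  rw [← one_div, le_div_iff₀ h1γ]
  linarith

theorem bellman_eq_sum_sum [Fintype S] [Fintype A] {π : S → A → ℝ} {P : S → A → S → ℝ}
    {v : S → ℝ} {s : S}
    (hv : v s = (∑ a, ∑ s', π s a * P s a s' * r s a s') +
      γ * ∑ s', (∑ a, π s a * P s a s') * v s') :
    v s = ∑ a, ∑ s', π s a * P s a s' * (r s a s' + γ * v s') := by
  rw [hv]
  simp only [sum_mul, mul_sum, mul_add, sum_add_distrib]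
  congr 1
  rw [sum_comm]
  exact sum_congr rfl fun a _ => sum_congr rfl fun s' _ => by ring

theorem sum_sum_mul_eq_one [Fintype S] [Fintype A]
    {π : S → A → ℝ} (hπ1 : ∀ s, ∑ a, π s a = 1)
    {P : S → A → S → ℝ} (hP1 : ∀ s a, ∑ s', P s a s' = 1) (s : S) :
    ∑ a, ∑ s', π s a * P s a s' = 1 := by
  simp only [← mul_sum, hP1, mul_one, hπ1]

theorem sq_tdUpdate_sub_le [DecidableEq S] (hα0 : 0 ≤ α) (hγ0 : 0 ≤ γ) {v : S → ℝ} {K : ℝ}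
    (s : S) (a : A) (s' : S) (hδ : |tdError γ r W (s, a, s')| ≤ K) :
    (tdUpdate γ α r W (s, a, s') s - v s) ^ 2 ≤
      (1 - α * (2 - γ)) * (W s - v s) ^ 2 + α * γ * (W s' - v s') ^ 2 + α ^ 2 * K ^ 2 +
        2 * α * (W s - v s) * (r s a s' + γ * v s' - v s) := by
  have hδ2 : tdError γ r W (s, a, s') ^ 2 ≤ K ^ 2 := by
    rw [← sq_abs]
    exact pow_le_pow_left₀ (abs_nonneg _) hδ 2
  simp only [tdUpdate, if_true, mul_one]
  unfold tdError at hδ2 ⊢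
  nlinarith [mul_nonneg (mul_nonneg hα0 hγ0) (sq_nonneg (W s - v s - (W s' - v s'))),
    mul_le_mul_of_nonneg_left hδ2 (sq_nonneg α)]

theorem sum_sum_sq_tdUpdate_sub_le [Fintype S] [Fintype A] [DecidableEq S]
    {π : S → A → ℝ} (hπ0 : ∀ s a, 0 ≤ π s a) (hπ1 : ∀ s, ∑ a, π s a = 1)
    {P : S → A → S → ℝ} (hP0 : ∀ s a s', 0 ≤ P s a s') (hP1 : ∀ s a, ∑ s', P s a s' = 1)
    (hα0 : 0 ≤ α) (hγ0 : 0 ≤ γ) {v : S → ℝ} {K : ℝ} {s : S}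
    (hv : v s = ∑ a, ∑ s', π s a * P s a s' * (r s a s' + γ * v s'))
    (hδ : ∀ a s', |tdError γ r W (s, a, s')| ≤ K) :
    ∑ a, ∑ s', π s a * P s a s' * (tdUpdate γ α r W (s, a, s') s - v s) ^ 2 ≤
      (1 - α * (2 - γ)) * (W s - v s) ^ 2 +
        α * γ * ∑ a, ∑ s', π s a * P s a s' * (W s' - v s') ^ 2 + α ^ 2 * K ^ 2 := by
  have hw := sum_sum_mul_eq_one hπ1 hP1 s
  -- the Bellman equation makes the cross term vanish on average
  have hcross : ∑ a, ∑ s', π s a * P s a s' * (r s a s' + γ * v s' - v s) = 0 := by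
    simp only [mul_sub, sum_sub_distrib, ← sum_mul, hw, ← hv, one_mul, sub_self]
  calc ∑ a, ∑ s', π s a * P s a s' * (tdUpdate γ α r W (s, a, s') s - v s) ^ 2
      ≤ ∑ a, ∑ s', π s a * P s a s' * ((1 - α * (2 - γ)) * (W s - v s) ^ 2 +
          α * γ * (W s' - v s') ^ 2 + α ^ 2 * K ^ 2 +
          2 * α * (W s - v s) * (r s a s' + γ * v s' - v s)) :=
        sum_le_sum fun a _ => sum_le_sum fun s' _ => mul_le_mul_of_nonneg_left
          (sq_tdUpdate_sub_le hα0 hγ0 s a s' (hδ a s')) (mul_nonneg (hπ0 s a) (hP0 s a s'))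
    _ = _ := by
        simp only [mul_add, sum_add_distrib, ← sum_mul, mul_left_comm _ (α * γ), ← mul_sum,
          mul_left_comm _ (2 * α * (W s - v s)), hcross, hP1, hπ1]
        ring

theorem sum_weight_sq_tdUpdate_sub_le [Fintype S] [Fintype A] [DecidableEq S]
    {d : S → ℝ} (hd : ∀ s, 0 ≤ d s) (hd1 : ∑ s, d s = 1)
    {π : S → A → ℝ} (hπ0 : ∀ s a, 0 ≤ π s a) (hπ1 : ∀ s, ∑ a, π s a = 1)
    {P : S → A → S → ℝ} (hP0 : ∀ s a s', 0 ≤ P s a s') (hP1 : ∀ s a, ∑ s', P s a s' = 1)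
    (hα0 : 0 ≤ α) (hγ0 : 0 ≤ γ) {v : S → ℝ} {K : ℝ} {s : S}
    (hv : v s = ∑ a, ∑ s', π s a * P s a s' * (r s a s' + γ * v s'))
    (hδ : ∀ a s', |tdError γ r W (s, a, s')| ≤ K) :
    ∑ t : S × A × S, d t.1 * π t.1 t.2.1 * P t.1 t.2.1 t.2.2 * (tdUpdate γ α r W t s - v s) ^ 2
      ≤ (1 - α * d s * (2 - γ)) * (W s - v s) ^ 2 +
        α * d s * γ * ∑ a, ∑ s', π s a * P s a s' * (W s' - v s') ^ 2 + α ^ 2 * d s * K ^ 2 := by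
  set g : S → ℝ := fun s₁ =>
    ∑ a, ∑ s', π s₁ a * P s₁ a s' * (tdUpdate γ α r W (s₁, a, s') s - v s) ^ 2
  have hsplit : ∑ t : S × A × S,
      d t.1 * π t.1 t.2.1 * P t.1 t.2.1 t.2.2 * (tdUpdate γ α r W t s - v s) ^ 2
      = ∑ s₁, d s₁ * g s₁ := by
    simp only [g, Fintype.sum_prod_type, mul_sum, mul_assoc]
  have hoff : ∀ s₁ ∈ univ, s₁ ≠ s → d s₁ * (g s₁ - (W s - v s) ^ 2) = 0 := by
    intro s₁ _ hs₁
    simp only [g, tdUpdate, if_neg hs₁.symm, mul_zero, zero_mul, add_zero, ← sum_mul,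
      sum_sum_mul_eq_one hπ1 hP1, one_mul, sub_self]
  have hmix : ∑ s₁, d s₁ * g s₁ = (W s - v s) ^ 2 + d s * (g s - (W s - v s) ^ 2) := by
    rw [← sum_eq_single_of_mem s (mem_univ s) hoff]
    simp only [mul_sub, sum_sub_distrib, ← sum_mul, hd1]
    ring
  have hrow := sum_sum_sq_tdUpdate_sub_le hπ0 hπ1 hP0 hP1 hα0 hγ0 hv hδ
  rw [hsplit, hmix]
  nlinarith [mul_le_mul_of_nonneg_left hrow (hd s)]

theorem abs_tdIterate_le [DecidableEq S] {Ω : Type*} (hr : ∀ s a s', |r s a s'| ≤ 1)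
    (hγ0 : 0 ≤ γ) (hγ1 : γ < 1) (hα0 : 0 ≤ α) (hα1 : α ≤ 1) {X : ℕ → Ω → S × A × S}
    {V : ℕ → Ω → S → ℝ} (h0 : ∀ ω u, |V 0 ω u| ≤ (1 - γ)⁻¹)
    (hstep : ∀ k ω, V (k + 1) ω = tdUpdate γ α r (V k ω) (X k ω)) (k : ℕ) (ω : Ω) (u : S) :
    |V k ω u| ≤ (1 - γ)⁻¹ := by
  induction k generalizing ω u with
  | zero => exact h0 ω u
  | succ k ih =>
    rw [hstep]
    exact abs_tdUpdate_le hr hγ0 hγ1 hα0 hα1 (ih ω) _ u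

end TemporalDifference

section Stochastic

variable {Ω S A : Type*} [MeasurableSpace Ω] {μ : Measure Ω} [Fintype S] [Fintype A]
  [DecidableEq S] [MeasurableSpace S] [MeasurableSingletonClass S] [MeasurableSpace A]
  [MeasurableSingletonClass A]

theorem integral_sq_tdUpdate_sub_le [IsProbabilityMeasure μ]
    {d : S → ℝ} (hd : ∀ s, 0 ≤ d s) (hd1 : ∑ s, d s = 1)
    {π : S → A → ℝ} (hπ0 : ∀ s a, 0 ≤ π s a) (hπ1 : ∀ s, ∑ a, π s a = 1)
    {P : S → A → S → ℝ} (hP0 : ∀ s a s', 0 ≤ P s a s') (hP1 : ∀ s a, ∑ s', P s a s' = 1)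
    {X : ℕ → Ω → S × A × S} (hXm : ∀ k, Measurable (X k)) (hX : iIndepFun X μ) {k : ℕ}
    (hLaw : μ.map (X k) = ∑ t : S × A × S,
      ENNReal.ofReal (d t.1 * π t.1 t.2.1 * P t.1 t.2.1 t.2.2) • Measure.dirac t)
    {γ α : ℝ} (hα0 : 0 ≤ α) (hγ0 : 0 ≤ γ) {r : S → A → S → ℝ} {v : S → ℝ}
    (hv : ∀ s, v s = ∑ a, ∑ s', π s a * P s a s' * (r s a s' + γ * v s'))
    {V : ℕ → Ω → S → ℝ} {V₀ : S → ℝ} (h0 : ∀ ω, V 0 ω = V₀)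
    (hstep : ∀ k ω, V (k + 1) ω = tdUpdate γ α r (V k ω) (X k ω)) {K : ℝ}
    (hδ : ∀ ω t, |tdError γ r (V k ω) t| ≤ K) (s : S) :
    ∫ ω, (V (k + 1) ω s - v s) ^ 2 ∂μ ≤
      (1 - α * d s * (2 - γ)) * ∫ ω, (V k ω s - v s) ^ 2 ∂μ +
        α * d s * γ * ∑ a, ∑ s', π s a * P s a s' * ∫ ω, (V k ω s' - v s') ^ 2 ∂μ +
          α ^ 2 * d s * K ^ 2 := by
  obtain ⟨F, hF⟩ := exists_eq_comp_history X h0 hstep k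
  have hsq : ∀ u, Integrable (fun ω => (V k ω u - v u) ^ 2) μ := fun u =>
    integrable_comp_of_recursion hXm h0 hstep k fun W => (W u - v u) ^ 2
  have hmean : Integrable (fun ω => ∑ a, ∑ s', π s a * P s a s' * (V k ω s' - v s') ^ 2) μ :=
    integrable_finsetSum _ fun a _ => integrable_finsetSum _ fun s' _ => (hsq s').const_mul _
  have hrhs : Integrable (fun ω => (1 - α * d s * (2 - γ)) * (V k ω s - v s) ^ 2 +
      α * d s * γ * ∑ a, ∑ s', π s a * P s a s' * (V k ω s' - v s') ^ 2) μ :=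
    ((hsq s).const_mul _).add (hmean.const_mul _)
  calc ∫ ω, (V (k + 1) ω s - v s) ^ 2 ∂μ
      = ∫ ω, ∑ t : S × A × S, d t.1 * π t.1 t.2.1 * P t.1 t.2.1 t.2.2 *
          (tdUpdate γ α r (V k ω) t s - v s) ^ 2 ∂μ := by
        simp only [hstep, hF]
        exact (hX.indepFun_history hXm k).integral_comp_eq_integral_sum
          (measurable_pi_lambda (fun ω (i : range k) => X i ω) fun i => hXm i) (hXm k)
          (fun t => mul_nonneg (mul_nonneg (hd _) (hπ0 _ _)) (hP0 _ _ _)) hLaw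
          fun h t => (tdUpdate γ α r (F h) t s - v s) ^ 2
    _ ≤ ∫ ω, ((1 - α * d s * (2 - γ)) * (V k ω s - v s) ^ 2 +
          α * d s * γ * ∑ a, ∑ s', π s a * P s a s' * (V k ω s' - v s') ^ 2 +
            α ^ 2 * d s * K ^ 2) ∂μ :=
        integral_mono (integrable_comp_of_recursion hXm h0 hstep k fun W =>
            ∑ t : S × A × S, d t.1 * π t.1 t.2.1 * P t.1 t.2.1 t.2.2 *
              (tdUpdate γ α r W t s - v s) ^ 2) (hrhs.add (integrable_const _))
          fun ω => sum_weight_sq_tdUpdate_sub_le hd hd1 hπ0 hπ1 hP0 hP1 hα0 hγ0 (hv s)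
            fun a s' => hδ ω (s, a, s')
    _ = _ := by
        rw [integral_add hrhs (integrable_const _),
          integral_add ((hsq s).const_mul _) (hmean.const_mul _)]
        simp only [integral_const_mul, integral_const, probReal_univ, one_smul,
          integral_finsetSum _ fun a _ => integrable_finsetSum _ fun s' _ =>
            (hsq s').const_mul _, integral_finsetSum _ fun s' _ => (hsq s').const_mul _]

theorem integral_sq_tdIterate_sub_le [IsProbabilityMeasure μ]
    {d : S → ℝ} (hd : ∀ s, 0 ≤ d s) (hd1 : ∑ s, d s = 1)
    {π : S → A → ℝ} (hπ0 : ∀ s a, 0 ≤ π s a) (hπ1 : ∀ s, ∑ a, π s a = 1)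
    {P : S → A → S → ℝ} (hP0 : ∀ s a s', 0 ≤ P s a s') (hP1 : ∀ s a, ∑ s', P s a s' = 1)
    {X : ℕ → Ω → S × A × S} (hXm : ∀ k, Measurable (X k)) (hX : iIndepFun X μ)
    (hLaw : ∀ k, μ.map (X k) = ∑ t : S × A × S,
      ENNReal.ofReal (d t.1 * π t.1 t.2.1 * P t.1 t.2.1 t.2.2) • Measure.dirac t)
    {γ α : ℝ} (hα0 : 0 < α) (hα : α ≤ 1 / 2) (hγ0 : 0 ≤ γ) (hγ1 : γ < 1)
    {r : S → A → S → ℝ} (hr : ∀ s a s', |r s a s'| ≤ 1) {dm : ℝ} (hdm0 : 0 < dm)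
    (hdm : ∀ s, dm ≤ d s) {v : S → ℝ}
    (hv : ∀ s, v s = ∑ a, ∑ s', π s a * P s a s' * (r s a s' + γ * v s'))
    {V : ℕ → Ω → S → ℝ} {V₀ : S → ℝ} (h0 : ∀ ω, V 0 ω = V₀)
    (hstep : ∀ k ω, V (k + 1) ω = tdUpdate γ α r (V k ω) (X k ω))
    (hVb : ∀ k ω u, |V k ω u| ≤ (1 - γ)⁻¹) (k : ℕ) (s : S) :
    ∫ ω, (V k ω s - v s) ^ 2 ∂μ ≤
      (1 - 2 * α * dm * (1 - γ)) ^ k * ∑ s, (V₀ s - v s) ^ 2 +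
        (1 - (1 - 2 * α * dm * (1 - γ)) ^ k) * (2 * α / (dm * (1 - γ) ^ 3)) := by
  have h1γ : 0 < 1 - γ := sub_pos.2 hγ1
  refine le_pow_mul_add_of_forall_le (u := fun k s => ∫ ω, (V k ω s - v s) ^ 2 ∂μ)
    (fun s => ?_) (fun k A hA s => ?_) k s
  · simp only [h0, integral_const, probReal_univ, one_smul]
    exact single_le_sum (f := fun s => (V₀ s - v s) ^ 2) (fun _ _ => sq_nonneg _) (mem_univ s)
  have hnext := integral_sq_tdUpdate_sub_le hd hd1 hπ0 hπ1 hP0 hP1 hXm hX (hLaw k) hα0.le hγ0 hv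
    h0 hstep (fun ω t => abs_tdError_le hr hγ0 hγ1 (hVb k ω) t) s
  have hmean : ∑ a, ∑ s', π s a * P s a s' * ∫ ω, (V k ω s' - v s') ^ 2 ∂μ ≤ A :=
    calc _ ≤ ∑ a, ∑ s', π s a * P s a s' * A := sum_le_sum fun a _ => sum_le_sum fun s' _ =>
          mul_le_mul_of_nonneg_left (hA s') (mul_nonneg (hπ0 s a) (hP0 s a s'))
      _ = A := by simp only [← sum_mul, sum_sum_mul_eq_one hπ1 hP1, one_mul]
  have hA0 : 0 ≤ A := (integral_nonneg fun ω => sq_nonneg _).trans (hA s)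
  have hds1 : d s ≤ 1 := hd1 ▸ single_le_sum (fun s _ => hd s) (mem_univ s)
  have hcoef : 0 ≤ 1 - α * d s * (2 - γ) := by nlinarith [mul_le_mul hα hds1 (hd s) (by norm_num)]
  -- `2 α / (dm (1-γ)³)` is the fixed point of `A ↦ (1 - 2 α dm (1-γ)) A + α² (2 (1-γ)⁻¹)²`
  have hfix : (1 - (1 - 2 * α * dm * (1 - γ))) * (2 * α / (dm * (1 - γ) ^ 3))
      = α ^ 2 * (2 * (1 - γ)⁻¹) ^ 2 := by
    field_simp
    ring
  rw [hfix]
  nlinarith [mul_le_mul_of_nonneg_left (hA s) hcoef,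
    mul_le_mul_of_nonneg_left hmean (mul_nonneg (mul_nonneg hα0.le (hd s)) hγ0),
    mul_nonneg (mul_nonneg (sub_nonneg.2 (hdm s)) (mul_nonneg hα0.le h1γ.le)) hA0,
    mul_nonneg (sub_nonneg.2 hds1) (sq_nonneg (α * (2 * (1 - γ)⁻¹)))]

end Stochastic

theorem mul_sqrt_div_sqrt_mul_sqrt {n a b c : ℝ} (hn : 0 ≤ n) (hb : 0 ≤ b) (hc : 0 ≤ c) :
    n * √a / (√b * √c) = √(n ^ 2 * a / (b * c)) := by
  rw [Real.sqrt_div' _ (mul_nonneg hb hc), Real.sqrt_mul (sq_nonneg n), Real.sqrt_sq hn,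
    Real.sqrt_mul hb]

theorem sqrt_mul_geom_le {n dm α γ M0 : ℝ} (k : ℕ) (hn : 1 ≤ n) (hdm0 : 0 < dm)
    (hdm1 : dm ≤ 1) (hα0 : 0 < α) (hα : α ≤ 1 / 2) (hγ0 : 0 ≤ γ) (hγ1 : γ < 1)
    (hM0 : 0 ≤ M0) :
    √(n * ((1 - 2 * α * dm * (1 - γ)) ^ k * M0 +
        (1 - (1 - 2 * α * dm * (1 - γ)) ^ k) * (2 * α / (dm * (1 - γ) ^ 3)))) ≤
      6 * n * √α / (√dm * √((1 - γ) ^ 3)) + √M0 * n * (1 - α * dm * (1 - γ)) ^ k := by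
  set x := α * dm * (1 - γ)
  set N := 2 * α / (dm * (1 - γ) ^ 3)
  have h1γ : 0 < 1 - γ := sub_pos.2 hγ1
  have hx0 : 0 < x := by positivity
  have hx1 : x ≤ 1 / 2 := by
    have : dm * (1 - γ) ≤ 1 := by nlinarith
    nlinarith
  have hN : 0 < N := by positivity
  have hρ₂ : 0 ≤ 1 - 2 * x := by linarith
  have hρk : 0 ≤ (1 - x) ^ k := pow_nonneg (by linarith) k
  have hρ₂k : (1 - 2 * x) ^ k ≤ ((1 - x) ^ k) ^ 2 := by
    calc (1 - 2 * x) ^ k ≤ ((1 - x) ^ 2) ^ k := pow_le_pow_left₀ hρ₂ (by nlinarith) k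
      _ = ((1 - x) ^ k) ^ 2 := by rw [← pow_mul, ← pow_mul, mul_comm]
  have hC : (1 - 2 * α * dm * (1 - γ)) ^ k * M0 + (1 - (1 - 2 * α * dm * (1 - γ)) ^ k) * N
      ≤ ((1 - x) ^ k * √M0 + √N) ^ 2 := by
    have e : 1 - 2 * α * dm * (1 - γ) = 1 - 2 * x := by ring
    rw [e, add_sq, mul_pow, Real.sq_sqrt hM0, Real.sq_sqrt hN.le]
    nlinarith [mul_le_mul_of_nonneg_right hρ₂k hM0, pow_nonneg hρ₂ k,
      mul_nonneg (mul_nonneg hρk (Real.sqrt_nonneg M0)) (Real.sqrt_nonneg N)]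
  have hnN : n * √N ≤ 6 * n * √α / (√dm * √((1 - γ) ^ 3)) := by
    rw [mul_sqrt_div_sqrt_mul_sqrt (by positivity) hdm0.le (by positivity),
      ← Real.sqrt_sq (by linarith : 0 ≤ n), ← Real.sqrt_mul (sq_nonneg n),
      Real.sqrt_sq (by linarith : 0 ≤ n)]
    refine Real.sqrt_le_sqrt ?_
    have hq : 0 ≤ α / (dm * (1 - γ) ^ 3) := by positivity
    rw [show N = 2 * (α / (dm * (1 - γ) ^ 3)) from mul_div_assoc _ _ _, mul_div_assoc]
    nlinarith [mul_nonneg (sq_nonneg n) hq]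
  have hsqrt_n : √n ≤ n := by
    nlinarith [Real.sq_sqrt (by linarith : 0 ≤ n), Real.sqrt_nonneg n,
      Real.one_le_sqrt.2 hn]
  calc _ ≤ √(n * ((1 - x) ^ k * √M0 + √N) ^ 2) := by gcongr
    _ = √n * ((1 - x) ^ k * √M0 + √N) := by
        rw [Real.sqrt_mul (by linarith), Real.sqrt_sq (by positivity)]
    _ ≤ n * ((1 - x) ^ k * √M0 + √N) := by gcongr
    _ ≤ _ := by nlinarith

theorem sqrt_mul_sq_two_mul_inv_le {n dm α γ : ℝ} (hn : 1 ≤ n) (hdm0 : 0 < dm)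
    (hndm : n * dm ≤ 1) (hα : 1 / 2 < α) (hγ0 : 0 ≤ γ) (hγ1 : γ < 1) :
    √(n * (2 * (1 - γ)⁻¹) ^ 2) ≤ 6 * n * √α / (√dm * √((1 - γ) ^ 3)) := by
  have h1γ : 0 < 1 - γ := sub_pos.2 hγ1
  rw [mul_sqrt_div_sqrt_mul_sqrt (by positivity) hdm0.le (by positivity)]
  refine Real.sqrt_le_sqrt ?_
  rw [le_div_iff₀ (by positivity)]
  have : (1 - γ) ^ 3 * (1 - γ)⁻¹ ^ 2 = 1 - γ := by field_simp
  have h4n : 0 ≤ 4 * n * (1 - γ) := mul_nonneg (by linarith) h1γ.le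
  nlinarith [mul_le_mul_of_nonneg_left hndm h4n]

/-- **Mean error bound for the final TD iterate (i.i.d. observation model).**
The observations `X k = (s_k, a_k, s'_k)` are i.i.d. with joint law
`q(s,a,s') = d(s)·π(a|s)·P(s'|s,a)`; the TD iterates start from a deterministic
`V 0 = V₀` with `‖V₀‖_∞ ≤ 1`; `V^π` solves the Bellman equation.  Then for every `k`,
`E[‖V k − V^π‖₂] ≤ 6 n √α/(d_min^{1/2} (1−γ)^{3/2}) + ‖V₀ − V^π‖₂ n ρ^k`,
with `n = |S|` and `ρ = 1 − α·d_min·(1−γ)`. -/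
theorem td_final_iterate_mean_error_bound
    {S A : Type*} [Fintype S] [Nonempty S] [DecidableEq S] [Fintype A]
    [MeasurableSpace S] [MeasurableSingletonClass S]
    [MeasurableSpace A] [MeasurableSingletonClass A]
    {Ω : Type*} [MeasurableSpace Ω] (μ : Measure Ω) [IsProbabilityMeasure μ]
    (γ α : ℝ) (hγ0 : 0 ≤ γ) (hγ1 : γ < 1) (hα0 : 0 < α) (hα1 : α < 1)
    (π : S → A → ℝ) (hπ0 : ∀ s a, 0 ≤ π s a) (hπ1 : ∀ s, ∑ a, π s a = 1)
    (P : S → A → S → ℝ) (hP0 : ∀ s a s', 0 ≤ P s a s') (hP1 : ∀ s a, ∑ s', P s a s' = 1)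
    (r : S → A → S → ℝ) (hr : ∀ s a s', |r s a s'| ≤ 1)
    (d : S → ℝ) (hd : ∀ s, 0 < d s) (hd1 : ∑ s, d s = 1)
    (X : ℕ → Ω → S × A × S) (hXmeas : ∀ k, Measurable (X k))
    (hIndep : iIndepFun X μ)
    (hLaw : ∀ k, μ.map (X k) =
      ∑ t : S × A × S,
        ENNReal.ofReal (d t.1 * π t.1 t.2.1 * P t.1 t.2.1 t.2.2) • Measure.dirac t)
    (Vpi : S → ℝ)
    (hBell : ∀ s, Vpi s = (∑ a, ∑ s', π s a * P s a s' * r s a s') +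
      γ * ∑ s', (∑ a, π s a * P s a s') * Vpi s')
    (V₀ : S → ℝ) (hV₀ : ‖V₀‖ ≤ 1)
    (V : ℕ → Ω → S → ℝ) (hV0 : ∀ ω, V 0 ω = V₀)
    (hVstep : ∀ k ω t, V (k + 1) ω t = V k ω t +
      α * (if t = (X k ω).1 then 1 else 0) *
        (r (X k ω).1 (X k ω).2.1 (X k ω).2.2 + γ * V k ω (X k ω).2.2 - V k ω (X k ω).1))
    (ρ : ℝ) (hρ : ρ = 1 - α * (⨅ s : S, d s) * (1 - γ)) :
    ∀ k : ℕ,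
      ∫ ω, Real.sqrt (∑ s, (V k ω s - Vpi s) ^ 2) ∂μ ≤
        6 * (Fintype.card S : ℝ) * Real.sqrt α /
            (Real.sqrt (⨅ s : S, d s) * Real.sqrt ((1 - γ) ^ 3)) +
          Real.sqrt (∑ s, (V₀ s - Vpi s) ^ 2) * (Fintype.card S : ℝ) * ρ ^ k := by
  have hstep : ∀ k ω, V (k + 1) ω = tdUpdate γ α r (V k ω) (X k ω) := fun k ω =>
    funext (hVstep k ω)
  have hv : ∀ s, Vpi s = ∑ a, ∑ s', π s a * P s a s' * (r s a s' + γ * Vpi s') := fun s =>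
    bellman_eq_sum_sum (hBell s)
  have hVpi := abs_le_inv_one_sub_of_bellman hπ0 hπ1 hP0 hP1 hr hγ0 hγ1 hv
  have hV₀' : ∀ u, |V₀ u| ≤ (1 - γ)⁻¹ := fun u =>
    ((norm_le_pi_norm V₀ u).trans hV₀).trans ((one_le_inv₀ (by linarith)).2 (by linarith))
  have hVb := abs_tdIterate_le hr hγ0 hγ1 hα0.le hα1.le (fun ω => hV0 ω ▸ hV₀') hstep
  have hdm : ∀ s, ⨅ s, d s ≤ d s := ciInf_le (Set.finite_range d).bddBelow
  have hdm0 : 0 < ⨅ s, d s := (exists_eq_ciInf_of_finite (f := d)).elim fun s₀ h => h ▸ hd s₀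
  have hn : (1 : ℝ) ≤ Fintype.card S := Nat.one_le_cast.2 Fintype.card_pos
  have hndm : Fintype.card S * ⨅ s, d s ≤ 1 := by
    simpa [hd1] using card_nsmul_le_sum univ d _ fun s _ => hdm s
  have hdm1 : ⨅ s, d s ≤ 1 := by nlinarith
  intro k
  have hsq : ∀ s, Integrable (fun ω => (V k ω s - Vpi s) ^ 2) μ := fun s =>
    integrable_comp_of_recursion hXmeas hV0 hstep k fun W => (W s - Vpi s) ^ 2
  rcases le_or_gt α (1 / 2) with hα | hα
  · refine (integral_sqrt_sum_sq_le hsq (integral_sq_tdIterate_sub_le (fun s => (hd s).le) hd1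
      hπ0 hπ1 hP0 hP1 hXmeas hIndep hLaw hα0 hα hγ0 hγ1 hr hdm0 hdm hv hV0 hstep hVb k)).trans ?_
    rw [hρ]
    exact sqrt_mul_geom_le k hn hdm0 hdm1 hα0 hα hγ0 hγ1 (sum_nonneg fun s _ => sq_nonneg _)
  · refine (integral_sqrt_sum_sq_le hsq fun s => integral_sq_le_of_abs_le fun ω =>
      (abs_sub _ _).trans (two_mul ((1 - γ)⁻¹) ▸ add_le_add (hVb k ω s) (hVpi s))).trans ?_
    refine le_add_of_le_of_nonneg (sqrt_mul_sq_two_mul_inv_le hn hdm0 hndm hα hγ0 hγ1)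
      (mul_nonneg (by positivity) (pow_nonneg ?_ k))
    rw [hρ]
    nlinarith [mul_le_mul hα1.le hdm1 hdm0.le zero_le_one]
end
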